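/- arXiv:1904.13369 — 6 statements merged into one kernel-verified Lean document; each statement's English description precedes it below -/
import Mathlib

section
/- Let H be a finite set of horizontal segments in ℝ², each crossing the vertical line L_v: x = 0, and let H_h ⊆ H. Let y : H → [0,1] be a fractional cover of H_h by H, i.e., for every i ∈ H_h, Σ_{j ∈ H, j ∩ i ≠ ∅} y(j) ≥ 1. Then there exists a subset S' ⊆ H such that every segment of H_h is stabbed by some segment of S' and |S'| ≤ Σ_{j ∈ H} y(j). (In other words, the integer program of stabbing H_h by segments of H has optimum value at most the optimum of its LP relaxation.) -/
/-!
Two horizontal segments crossing the line `x = 0` meet exactly when they lie at the same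
height, i.e. when they have the same trace on that line. Stabbing is therefore an equivalence
relation on `H`, and one representative of each class met by `H_h` stabs all of `H_h`. The
fractional cover puts weight at least `1` on every such class, and the classes are disjoint,
so their number is at most the total weight.
-/

open scoped Classical

/-- `s` is a horizontal segment crossing the vertical line `x = 0`. -/
def IsHorizontalCrossing (s : Set (ℝ × ℝ)) : Prop :=
  ∃ a b y : ℝ, a ≤ 0 ∧ 0 ≤ b ∧ s = Set.Icc a b ×ˢ ({y} : Set ℝ)

def axisTrace (s : Set (ℝ × ℝ)) : Set ℝ :=
  {t | ((0 : ℝ), t) ∈ s}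

namespace IsHorizontalCrossing

lemma exists_axisTrace_eq_singleton {s : Set (ℝ × ℝ)} (hs : IsHorizontalCrossing s) :
    ∃ y, axisTrace s = {y} ∧ ∀ p ∈ s, p.2 = y := by
  obtain ⟨a, b, y, ha, hb, rfl⟩ := hs
  refine ⟨y, ?_, fun p hp => hp.2⟩
  ext t
  simp [axisTrace, ha, hb]

lemma inter_nonempty_iff {s t : Set (ℝ × ℝ)} (hs : IsHorizontalCrossing s)
    (ht : IsHorizontalCrossing t) : (s ∩ t).Nonempty ↔ axisTrace s = axisTrace t := by
  obtain ⟨y, hsy, hs_height⟩ := hs.exists_axisTrace_eq_singleton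
  obtain ⟨z, htz, ht_height⟩ := ht.exists_axisTrace_eq_singleton
  rw [hsy, htz, Set.singleton_eq_singleton_iff]
  constructor
  · rintro ⟨p, hps, hpt⟩
    rw [← hs_height p hps, ← ht_height p hpt]
  · rintro rfl
    have hys : y ∈ axisTrace s := hsy ▸ rfl
    have hyt : y ∈ axisTrace t := htz ▸ rfl
    exact ⟨(0, y), hys, hyt⟩

end IsHorizontalCrossing

namespace Finset

variable {ι β R : Type*} [DecidableEq β]

lemma exists_subset_card_eq_card_image_forall_exists_eq (t : Finset ι) (f : ι → β) :
    ∃ u ⊆ t, u.card = (t.image f).card ∧ ∀ i ∈ t, ∃ r ∈ u, f r = f i := by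
  obtain ⟨u, hut, hinj, himg⟩ := exists_subset_injOn_image_eq_of_surjOn (t : Set ι) (t.image f)
    (by simpa using Set.surjOn_image f t)
  refine ⟨u, by exact_mod_cast hut, himg ▸ (card_image_of_injOn hinj).symm, fun i hi => ?_⟩
  have hfi : f i ∈ u.image f := himg ▸ mem_image_of_mem f hi
  simpa using hfi

lemma card_image_le_sum_of_one_le_sum_fiber [Semiring R] [PartialOrder R] [IsOrderedRing R]
    {s t : Finset ι} (f : ι → β) (y : ι → R) (hts : t ⊆ s) (hy : ∀ j ∈ s, 0 ≤ y j)
    (hfiber : ∀ i ∈ t, 1 ≤ ∑ j ∈ s with f j = f i, y j) :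
    ((t.image f).card : R) ≤ ∑ j ∈ s, y j :=
  calc ((t.image f).card : R) = ∑ b ∈ t.image f, 1 := by simp
    _ ≤ ∑ b ∈ t.image f, ∑ j ∈ s with f j = b, y j := sum_le_sum fun b hb => by
          obtain ⟨i, hi, rfl⟩ := mem_image.1 hb
          exact hfiber i hi
    _ ≤ ∑ b ∈ s.image f, ∑ j ∈ s with f j = b, y j :=
          sum_le_sum_of_subset_of_nonneg (image_subset_image hts) fun _ _ _ =>
            sum_nonneg fun j hj => hy j (mem_filter.1 hj).1
    _ = ∑ j ∈ s, y j := sum_fiberwise_of_maps_to (fun j hj => mem_image_of_mem f hj) y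

end Finset

/-- Lemma 4 of the paper: the integer program of stabbing a subfamily `Hh` of
horizontal segments (all crossing `L_v : x = 0`) by segments of `H` has optimum
at most the cost of any fractional cover. -/
theorem stmt2 (H Hh : Finset (Set (ℝ × ℝ)))
    (hH : ∀ h ∈ H, IsHorizontalCrossing h)
    (hHh : Hh ⊆ H)
    (y : Set (ℝ × ℝ) → ℝ)
    (hy01 : ∀ j ∈ H, y j ∈ Set.Icc (0 : ℝ) 1)
    (hcover : ∀ i ∈ Hh, 1 ≤ ∑ j ∈ H.filter (fun j => (j ∩ i).Nonempty), y j) :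
    ∃ S' ⊆ H, (∀ i ∈ Hh, ∃ s ∈ S', (s ∩ i).Nonempty) ∧
      (S'.card : ℝ) ≤ ∑ j ∈ H, y j := by
  have stab_iff : ∀ i ∈ H, ∀ j ∈ H, (j ∩ i).Nonempty ↔ axisTrace j = axisTrace i :=
    fun i hi j hj => (hH j hj).inter_nonempty_iff (hH i hi)
  have hfiber : ∀ i ∈ Hh, 1 ≤ ∑ j ∈ H with axisTrace j = axisTrace i, y j := fun i hi => by
    rw [← Finset.filter_congr fun j hj => stab_iff i (hHh hi) j hj]
    exact hcover i hi
  obtain ⟨S, hSHh, hcard, hrep⟩ := Hh.exists_subset_card_eq_card_image_forall_exists_eq axisTrace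
  refine ⟨S, hSHh.trans hHh, fun i hi => ?_, ?_⟩
  · obtain ⟨r, hr, hri⟩ := hrep i hi
    exact ⟨r, hr, (stab_iff i (hHh hi) r (hHh (hSHh hr))).2 hri⟩
  · rw [hcard]
    exact Finset.card_image_le_sum_of_one_le_sum_fiber axisTrace y hHh
      (fun j hj => (hy01 j hj).1) hfiber
end

section
/- Let H be a finite set of horizontal segments each crossing the vertical line L_v: x = 0, let V(l) be a finite set of vertical segments each with x-coordinate strictly less than 0, and V(r) a finite set of vertical segments each with x-coordinate strictly greater than 0, with H, V(l), V(r) pairwise disjoint. Let y* : H ∪ V(l) ∪ V(r) → [0,1] be a fractional cover of H by H ∪ V(l) ∪ V(r), and define H_l = {i ∈ H : Σ_{j ∈ V(l), j ∩ i ≠ ∅} y*(j) ≥ 2/5}, H_r = {i ∈ H : Σ_{j ∈ V(r), j ∩ i ≠ ∅} y*(j) ≥ 2/5}, and H_h = {i ∈ H : Σ_{j ∈ H, j ∩ i ≠ ∅} y*(j) ≥ 1/5}. Then H = H_l ∪ H_r ∪ H_h; consequently, if S₁ hits H_l, S₂ hits H_r and S₃ hits H_h, then S₁ ∪ S₂ ∪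 S₃ hits H. -/
/-! Since `2/5 + 2/5 + 1/5 = 1`, splitting the cover constraint of `i ∈ H` along the disjoint
union `H ∪ V(l) ∪ V(r)` forces at least one of the three partial sums up to its threshold. -/

open scoped Classical

def IsVerticalLeft (s : Set (ℝ × ℝ)) : Prop :=
  ∃ x c d : ℝ, x < 0 ∧ c ≤ d ∧ s = ({x} : Set ℝ) ×ˢ Set.Icc c d

def IsVerticalRight (s : Set (ℝ × ℝ)) : Prop :=
  ∃ x c d : ℝ, 0 < x ∧ c ≤ d ∧ s = ({x} : Set ℝ) ×ˢ Set.Icc c d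

def Hits (A D : Finset (Set (ℝ × ℝ))) : Prop :=
  ∀ d ∈ D, ∃ a ∈ A, (a ∩ d).Nonempty

theorem Finset.sum_filter_union_union {ι M : Type*} [AddCommMonoid M] [DecidableEq ι]
    {s t u : Finset ι} (hst : Disjoint s t) (hsu : Disjoint s u) (htu : Disjoint t u)
    (p : ι → Prop) [DecidablePred p] (f : ι → M) :
    ∑ j ∈ (s ∪ t ∪ u).filter p, f j =
      ∑ j ∈ s.filter p, f j + ∑ j ∈ t.filter p, f j + ∑ j ∈ u.filter p, f j := by
  simp only [Finset.sum_filter]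
  rw [Finset.sum_union (Finset.disjoint_union_left.2 ⟨hsu, htu⟩), Finset.sum_union hst]

theorem Finset.eq_filter_union_filter_union_filter_of_add_le {α : Type*} [DecidableEq α]
    (s : Finset α) {f g h : α → ℝ} {a b c r : ℝ} (habc : a + b + c ≤ r)
    (hs : ∀ i ∈ s, r ≤ f i + g i + h i) :
    s = s.filter (fun i => a ≤ f i) ∪ s.filter (fun i => b ≤ g i) ∪
      s.filter (fun i => c ≤ h i) := by
  refine Finset.Subset.antisymm (fun i hi => ?_) <|
    Finset.union_subset (Finset.union_subset (Finset.filter_subset _ _)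
      (Finset.filter_subset _ _)) (Finset.filter_subset _ _)
  by_contra hnot
  simp only [Finset.mem_union, Finset.mem_filter, hi, true_and, not_or, not_le] at hnot
  linarith [hs i hi]

theorem Hits.union {A B D E : Finset (Set (ℝ × ℝ))} (hA : Hits A D) (hB : Hits B E) :
    Hits (A ∪ B) (D ∪ E) := by
  intro d hd
  rcases Finset.mem_union.1 hd with hd | hd
  · obtain ⟨a, ha, hne⟩ := hA d hd
    exact ⟨a, Finset.mem_union_left _ ha, hne⟩
  · obtain ⟨b, hb, hne⟩ := hB d hd
    exact ⟨b, Finset.mem_union_right _ hb, hne⟩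

theorem stmt4_general (H Vl Vr : Finset (Set (ℝ × ℝ)))
    (hd1 : Disjoint H Vl) (hd2 : Disjoint H Vr) (hd3 : Disjoint Vl Vr)
    (ystar : Set (ℝ × ℝ) → ℝ)
    (hcover : ∀ i ∈ H,
      1 ≤ ∑ j ∈ (H ∪ Vl ∪ Vr).filter (fun j => (j ∩ i).Nonempty), ystar j)
    (Hl Hr Hh : Finset (Set (ℝ × ℝ)))
    (hHl : Hl = H.filter
      (fun i => (2 : ℝ) / 5 ≤ ∑ j ∈ Vl.filter (fun j => (j ∩ i).Nonempty), ystar j))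
    (hHr : Hr = H.filter
      (fun i => (2 : ℝ) / 5 ≤ ∑ j ∈ Vr.filter (fun j => (j ∩ i).Nonempty), ystar j))
    (hHh : Hh = H.filter
      (fun i => (1 : ℝ) / 5 ≤ ∑ j ∈ H.filter (fun j => (j ∩ i).Nonempty), ystar j)) :
    H = Hl ∪ Hr ∪ Hh ∧
      ∀ S₁ S₂ S₃ : Finset (Set (ℝ × ℝ)),
        Hits S₁ Hl → Hits S₂ Hr → Hits S₃ Hh → Hits (S₁ ∪ S₂ ∪ S₃) H := by
  have hsplit : ∀ i ∈ H,
      1 ≤ ∑ j ∈ Vl.filter (fun j => (j ∩ i).Nonempty), ystar j +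
        ∑ j ∈ Vr.filter (fun j => (j ∩ i).Nonempty), ystar j +
        ∑ j ∈ H.filter (fun j => (j ∩ i).Nonempty), ystar j := by
    intro i hi
    have hi := hcover i hi
    rw [Finset.sum_filter_union_union hd1 hd2 hd3] at hi
    linarith
  have hH_eq : H = Hl ∪ Hr ∪ Hh := by
    subst hHl hHr hHh
    exact H.eq_filter_union_filter_union_filter_of_add_le (by norm_num) hsplit
  refine ⟨hH_eq, fun S₁ S₂ S₃ h₁ h₂ h₃ => ?_⟩
  rw [hH_eq]
  exact (h₁.union h₂).union h₃

/-- Correctness of the 5-approximation: if `ystar` is a fractional cover of `H`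
by `H ∪ V(l) ∪ V(r)`, then `H = H_l ∪ H_r ∪ H_h`; consequently solutions of the
three subproblems together hit all of `H`. -/
theorem stmt4 (H Vl Vr : Finset (Set (ℝ × ℝ)))
    (hH : ∀ h ∈ H, IsHorizontalCrossing h)
    (hVl : ∀ v ∈ Vl, IsVerticalLeft v)
    (hVr : ∀ v ∈ Vr, IsVerticalRight v)
    (hd1 : Disjoint H Vl) (hd2 : Disjoint H Vr) (hd3 : Disjoint Vl Vr)
    (ystar : Set (ℝ × ℝ) → ℝ)
    (hy01 : ∀ j ∈ H ∪ Vl ∪ Vr, ystar j ∈ Set.Icc (0 : ℝ) 1)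
    (hcover : ∀ i ∈ H,
      1 ≤ ∑ j ∈ (H ∪ Vl ∪ Vr).filter (fun j => (j ∩ i).Nonempty), ystar j)
    (Hl Hr Hh : Finset (Set (ℝ × ℝ)))
    (hHl : Hl = H.filter
      (fun i => (2 : ℝ) / 5 ≤ ∑ j ∈ Vl.filter (fun j => (j ∩ i).Nonempty), ystar j))
    (hHr : Hr = H.filter
      (fun i => (2 : ℝ) / 5 ≤ ∑ j ∈ Vr.filter (fun j => (j ∩ i).Nonempty), ystar j))
    (hHh : Hh = H.filter
      (fun i => (1 : ℝ) / 5 ≤ ∑ j ∈ H.filter (fun j => (j ∩ i).Nonempty), ystar j)) :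
    H = Hl ∪ Hr ∪ Hh ∧
      ∀ S₁ S₂ S₃ : Finset (Set (ℝ × ℝ)),
        Hits S₁ Hl → Hits S₂ Hr → Hits S₃ Hh → Hits (S₁ ∪ S₂ ∪ S₃) H :=
  stmt4_general H Vl Vr hd1 hd2 hd3 ystar hcover Hl Hr Hh hHl hHr hHh
end

section
/- Let H' be a finite set of horizontal segments each crossing the vertical line L_v: x = 0, and let V(l) be a finite set of vertical segments all lying on the same side of L_v (say each with x-coordinate strictly less than 0). If y : V(l) → [0,1] is a fractional cover of H' by V(l), then there exists S ⊆ V(l) such that every segment of H' is stabbed by some segment of S and |S| ≤ 2·Σ_{j ∈ V(l)} y(j). (That is, the integrality gap of the LP for stabbing the segments of H' by vertical segments on one side of L_v is at most 2.) -/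
open scoped Classical

/-!
Greedy rounding. Take the horizontal segment `h` whose left endpoint is rightmost, and among the
vertical segments stabbing `h` the one reaching highest and the one reaching lowest. A horizontal
segment `i` stabbed by some vertical `j` stabbing `h` is stabbed by one of these two: its height
lies between that of `h` and an end of `j`, and it reaches at least as far left as `h`. So after
putting the two into the cover, the uncovered segments are still fractionally covered by the
verticals not stabbing `h`, and we recurse; the discarded verticals carry weight at least `1`,
which pays for the two chosen ones.
-/

open Finset

section Rounding

variable {α β : Type*} (stabs : β → α → Prop)

def LocallyDominated (k : ℕ) (H : Finset α) (V : Finset β) : Prop :=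
  ∀ H₀ ⊆ H, H₀.Nonempty → ∃ h ∈ H₀, ∀ N ⊆ V, (∀ j ∈ N, stabs j h) →
    ∃ D ⊆ N, D.card ≤ k ∧ ∀ i ∈ H₀, ∀ j ∈ N, stabs j i → ∃ d ∈ D, stabs d i

variable {stabs}

theorem LocallyDominated.mono {k : ℕ} {H H' : Finset α} {V V' : Finset β}
    (hdom : LocallyDominated stabs k H V) (hH : H' ⊆ H) (hV : V' ⊆ V) :
    LocallyDominated stabs k H' V' := fun H₀ hH₀ hne =>
  (hdom H₀ (hH₀.trans hH) hne).imp fun _ ⟨hh, hN⟩ => ⟨hh, fun N hN' => hN N (hN'.trans hV)⟩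

theorem LocallyDominated.exists_cover_card_le {k : ℕ} {H : Finset α} {V : Finset β}
    (hdom : LocallyDominated stabs k H V) {y : β → ℝ} (hy : ∀ j ∈ V, 0 ≤ y j)
    (hcover : ∀ i ∈ H, 1 ≤ ∑ j ∈ V.filter (stabs · i), y j) :
    ∃ S ⊆ V, (∀ i ∈ H, ∃ s ∈ S, stabs s i) ∧ (S.card : ℝ) ≤ k * ∑ j ∈ V, y j := by
  induction H using Finset.strongInduction generalizing V with
  | H H ih =>
    rcases H.eq_empty_or_nonempty with rfl | hne
    · exact ⟨∅, empty_subset _, by simp, by simpa using mul_nonneg k.cast_nonneg (sum_nonneg hy)⟩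
    obtain ⟨h, hh, hdomh⟩ := hdom H subset_rfl hne
    set N := V.filter (stabs · h)
    obtain ⟨D, hDN, hDk, hD⟩ := hdomh N (filter_subset _ _) fun j hj => (mem_filter.1 hj).2
    set H' := H.filter fun i => ¬∃ d ∈ D, stabs d i
    set V' := V.filter fun j => ¬stabs j h
    have hN : 1 ≤ ∑ j ∈ N, y j := hcover h hh
    have hhD : ∃ d ∈ D, stabs d h := by
      obtain ⟨j, hj⟩ : N.Nonempty := nonempty_of_sum_ne_zero (f := y) (by linarith)
      exact hD h hh j hj (mem_filter.1 hj).2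
    have hH' : H' ⊂ H := filter_ssubset.2 ⟨h, hh, not_not.2 hhD⟩
    have hcover' : ∀ i ∈ H', 1 ≤ ∑ j ∈ V'.filter (stabs · i), y j := by
      intro i hi
      obtain ⟨hiH, hiD⟩ := mem_filter.1 hi
      convert hcover i hiH using 2
      rw [filter_filter]
      exact filter_congr fun j hj =>
        and_iff_right_of_imp fun hji hjh => hiD (hD i hiH j (mem_filter.2 ⟨hj, hjh⟩) hji)
    obtain ⟨S, hSV, hScov, hScard⟩ := ih H' hH' (hdom.mono hH'.subset (filter_subset _ _))
      (fun j hj => hy j (filter_subset _ _ hj)) hcover'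
    refine ⟨D ∪ S, union_subset (hDN.trans (filter_subset _ _)) (hSV.trans (filter_subset _ _)),
      fun i hi => ?_, ?_⟩
    · by_cases hiD : ∃ d ∈ D, stabs d i
      · obtain ⟨d, hd, hdi⟩ := hiD
        exact ⟨d, mem_union_left _ hd, hdi⟩
      · obtain ⟨s, hs, hsi⟩ := hScov i (mem_filter.2 ⟨hi, hiD⟩)
        exact ⟨s, mem_union_right _ hs, hsi⟩
    · have hDcard : (D.card : ℝ) ≤ k * ∑ j ∈ N, y j :=
        calc (D.card : ℝ) ≤ k := by exact_mod_cast hDk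
          _ ≤ k * ∑ j ∈ N, y j := le_mul_of_one_le_right k.cast_nonneg hN
      calc ((D ∪ S).card : ℝ) ≤ D.card + S.card := by exact_mod_cast card_union_le D S
        _ ≤ k * ∑ j ∈ N, y j + k * ∑ j ∈ V', y j := add_le_add hDcard hScard
        _ = k * ∑ j ∈ V, y j := by rw [← mul_add, sum_filter_add_sum_filter_not]

end Rounding

theorem Set.singleton_prod_inter_prod_singleton_nonempty {γ δ : Type*} {x : γ} {s : Set γ}
    {y : δ} {t : Set δ} : (({x} ×ˢ t) ∩ (s ×ˢ {y})).Nonempty ↔ x ∈ s ∧ y ∈ t := by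
  simp [Set.prod_inter_prod, Set.prod_nonempty_iff]

section Extremes

variable {α β : Type*} [ConditionallyCompleteLattice α] {a b : α}

theorem Set.csInf_fst_image_Icc_prod (hab : a ≤ b) {t : Set β} (ht : t.Nonempty) :
    sInf (Prod.fst '' (Set.Icc a b ×ˢ t)) = a := by
  rw [Set.fst_image_prod _ ht, csInf_Icc hab]

theorem Set.csInf_snd_image_prod_Icc (hab : a ≤ b) {s : Set β} (hs : s.Nonempty) :
    sInf (Prod.snd '' (s ×ˢ Set.Icc a b)) = a := by
  rw [Set.snd_image_prod hs, csInf_Icc hab]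

theorem Set.csSup_snd_image_prod_Icc (hab : a ≤ b) {s : Set β} (hs : s.Nonempty) :
    sSup (Prod.snd '' (s ×ˢ Set.Icc a b)) = b := by
  rw [Set.snd_image_prod hs, csSup_Icc hab]

end Extremes

theorem locallyDominated_horizontalCrossing_verticalLeft {H V : Finset (Set (ℝ × ℝ))}
    (hH : ∀ h ∈ H, IsHorizontalCrossing h) (hV : ∀ v ∈ V, IsVerticalLeft v) :
    LocallyDominated (fun v h => (v ∩ h).Nonempty) 2 H V := by
  intro H₀ hH₀ hne
  obtain ⟨h, hh, hleft⟩ := H₀.exists_max_image (fun s => sInf (Prod.fst '' s)) hne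
  refine ⟨h, hh, fun N hNV hNh => ?_⟩
  rcases N.eq_empty_or_nonempty with rfl | hNne
  · exact ⟨∅, subset_rfl, by simp, by simp⟩
  obtain ⟨top, htop, hhighest⟩ := N.exists_max_image (fun s => sSup (Prod.snd '' s)) hNne
  obtain ⟨bot, hbot, hlowest⟩ := N.exists_min_image (fun s => sInf (Prod.snd '' s)) hNne
  refine ⟨{top, bot}, insert_subset htop (singleton_subset_iff.2 hbot), card_le_two,
    fun i hi j hj hji => ?_⟩
  have hi_left := hleft i hi
  have hj_top := hhighest j hj
  have hj_bot := hlowest j hj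
  have htop_h := hNh top htop
  have hbot_h := hNh bot hbot
  obtain ⟨ah, bh, yh, hah, hbh, rfl⟩ := hH h (hH₀ hh)
  obtain ⟨ai, bi, yi, hai, hbi, rfl⟩ := hH i (hH₀ hi)
  obtain ⟨xj, cj, dj, -, hcdj, rfl⟩ := hV j (hNV hj)
  obtain ⟨xt, ct, dt, hxt, hcdt, rfl⟩ := hV top (hNV htop)
  obtain ⟨xb, cb, db, hxb, hcdb, rfl⟩ := hV bot (hNV hbot)
  simp only [Set.singleton_prod_inter_prod_singleton_nonempty, Set.mem_Icc,
    Set.csInf_fst_image_Icc_prod (hah.trans hbh) (Set.singleton_nonempty _),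
    Set.csInf_fst_image_Icc_prod (hai.trans hbi) (Set.singleton_nonempty _),
    Set.csInf_snd_image_prod_Icc hcdb (Set.singleton_nonempty _),
    Set.csSup_snd_image_prod_Icc hcdt (Set.singleton_nonempty _),
    Set.csInf_snd_image_prod_Icc hcdj (Set.singleton_nonempty _),
    Set.csSup_snd_image_prod_Icc hcdj (Set.singleton_nonempty _)]
    at hi_left hj_top hj_bot htop_h hbot_h hji
  rcases le_total yi yh with hy | hy
  · refine ⟨_, mem_insert_of_mem (mem_singleton_self _),
      Set.singleton_prod_inter_prod_singleton_nonempty.2 ?_⟩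
    exact ⟨⟨by linarith, by linarith⟩, by linarith, by linarith⟩
  · refine ⟨_, mem_insert_self _ _, Set.singleton_prod_inter_prod_singleton_nonempty.2 ?_⟩
    exact ⟨⟨by linarith, by linarith⟩, by linarith, by linarith⟩

/-- Lemma 3 of the paper (integrality gap 2): if `y` is a fractional cover of a
family `H'` of horizontal segments crossing `L_v : x = 0` by a family `Vl` of
vertical segments all lying strictly to the left of `L_v`, then there is an
integral cover `S ⊆ Vl` of size at most twice the fractional cost. -/
theorem stmt5 (H' Vl : Finset (Set (ℝ × ℝ)))
    (hH : ∀ h ∈ H', IsHorizontalCrossing h)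
    (hVl : ∀ v ∈ Vl, IsVerticalLeft v)
    (y : Set (ℝ × ℝ) → ℝ)
    (hy01 : ∀ j ∈ Vl, y j ∈ Set.Icc (0 : ℝ) 1)
    (hcover : ∀ i ∈ H', 1 ≤ ∑ j ∈ Vl.filter (fun j => (j ∩ i).Nonempty), y j) :
    ∃ S ⊆ Vl, (∀ i ∈ H', ∃ s ∈ S, (s ∩ i).Nonempty) ∧
      (S.card : ℝ) ≤ 2 * ∑ j ∈ Vl, y j := by
  simpa using (locallyDominated_horizontalCrossing_verticalLeft hH hVl).exists_cover_card_le
    (fun j hj => (hy01 j hj).1) hcover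
end

section
/- Let (X, C⁺, C⁻) be a monotone 3SAT instance with |X| = n, and let G with the relation 'stabs' be the associated abstract stabbing instance described in the context. Then the instance has a satisfying assignment if and only if there exists a subset S ⊆ G with |S| ≤ n such that every element of G is stabbed by some element of S. -/
/-- The three horizontal segments associated with a variable:
left (`l`), right (`r`), and middle (`m`, the segment `s(v)`). -/
inductive VPart : Type
  | l | r | m
  deriving DecidableEq

/-- The abstract stabbing relation of the reduction from Planar Monotone 3SAT:
the ground set is `({l,r,m} × X) ⊔ C⁺ ⊔ C⁻`; segments of the same variable
pairwise intersect; `(l, v)` stabs a positive clause `c` iff `v ∈ c`;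
`(r, v)` stabs a negative clause `c` iff `v ∈ c`; every element stabs itself;
no other pairs are related. -/
def Stabs {ν P N : Type*} (cp : P → Finset ν) (cn : N → Finset ν) :
    (VPart × ν) ⊕ P ⊕ N → (VPart × ν) ⊕ P ⊕ N → Prop
  | .inl (_, v), .inl (_, v') => v = v'
  | .inl (t, v), .inr (.inl c) => t = VPart.l ∧ v ∈ cp c
  | .inr (.inl c), .inl (t, v) => t = VPart.l ∧ v ∈ cp c
  | .inl (t, v), .inr (.inr c) => t = VPart.r ∧ v ∈ cn c
  | .inr (.inr c), .inl (t, v) => t = VPart.r ∧ v ∈ cn c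
  | .inr (.inl c), .inr (.inl c') => c = c'
  | .inr (.inr c), .inr (.inr c') => c = c'
  | _, _ => False

/-!
A cover of size at most `n` must stab each middle segment `s(v)`, which only the three segments
of `v` itself do; so it consists of exactly one segment per variable, i.e. it is a choice
`t : X → {l, r, m}`. Such a choice stabs every positive (negative) clause iff some variable of the
clause has its left (right) segment chosen, so reading `t v = l` as "`v` is true" translates
covers into satisfying assignments and back.
-/

open Finset

section

variable {ν P N : Type*} (cp : P → Finset ν) (cn : N → Finset ν)

theorem stabs_middle_iff {s : (VPart × ν) ⊕ P ⊕ N} {v : ν} :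
    Stabs cp cn s (.inl (.m, v)) ↔ ∃ t, s = .inl (t, v) := by
  rcases s with ⟨t, w⟩ | c | c <;> simp [Stabs]

variable [Fintype ν]

def segmentChoice (t : ν → VPart) : Finset ((VPart × ν) ⊕ P ⊕ N) :=
  univ.map ⟨fun v => .inl (t v, v), fun _ _ h => congrArg Prod.snd (Sum.inl_injective h)⟩

theorem card_segmentChoice (t : ν → VPart) :
    (segmentChoice t : Finset ((VPart × ν) ⊕ P ⊕ N)).card = Fintype.card ν := by
  simp [segmentChoice]

@[simp]
theorem mem_segmentChoice {t : ν → VPart} {s : (VPart × ν) ⊕ P ⊕ N} :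
    s ∈ segmentChoice t ↔ ∃ v, .inl (t v, v) = s := by
  simp only [segmentChoice, mem_map, mem_univ, true_and]
  rfl

theorem covers_segmentChoice_iff (t : ν → VPart) :
    (∀ g, ∃ s ∈ (segmentChoice t : Finset ((VPart × ν) ⊕ P ⊕ N)), Stabs cp cn s g) ↔
      (∀ c, ∃ v ∈ cp c, t v = .l) ∧ (∀ c, ∃ v ∈ cn c, t v = .r) := by
  simp only [Sum.forall, Stabs]
  simp [and_comm]

theorem exists_eq_segmentChoice_of_covers {S : Finset ((VPart × ν) ⊕ P ⊕ N)}
    (hcard : S.card ≤ Fintype.card ν) (hcov : ∀ g, ∃ s ∈ S, Stabs cp cn s g) :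
    ∃ t, S = segmentChoice t := by
  have hsegment : ∀ v, ∃ t, .inl (t, v) ∈ S := fun v => by
    obtain ⟨s, hs, hstab⟩ := hcov (.inl (.m, v))
    obtain ⟨t, rfl⟩ := (stabs_middle_iff cp cn).1 hstab
    exact ⟨t, hs⟩
  choose t ht using hsegment
  refine ⟨t, (eq_of_subset_of_card_le ?_ ?_).symm⟩
  · simpa [subset_iff] using ht
  · rwa [card_segmentChoice]

end

theorem stmt7_general {ν P N : Type*} [Fintype ν]
    (cp : P → Finset ν) (cn : N → Finset ν)
    (n : ℕ) (hn : n = Fintype.card ν) :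
    (∃ f : ν → Bool,
        (∀ c : P, ∃ v ∈ cp c, f v = true) ∧ (∀ c : N, ∃ v ∈ cn c, f v = false)) ↔
      (∃ S : Finset ((VPart × ν) ⊕ P ⊕ N), S.card ≤ n ∧
        ∀ g, ∃ s ∈ S, Stabs cp cn s g) := by
  subst hn
  constructor
  · rintro ⟨f, hpos, hneg⟩
    refine ⟨segmentChoice fun v => cond (f v) .l .r, (card_segmentChoice _).le,
      (covers_segmentChoice_iff cp cn _).2 ⟨fun c => ?_, fun c => ?_⟩⟩
    · obtain ⟨v, hv, hfv⟩ := hpos c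
      exact ⟨v, hv, by simp [hfv]⟩
    · obtain ⟨v, hv, hfv⟩ := hneg c
      exact ⟨v, hv, by simp [hfv]⟩
  · rintro ⟨S, hcard, hcov⟩
    obtain ⟨t, rfl⟩ := exists_eq_segmentChoice_of_covers cp cn hcard hcov
    obtain ⟨hpos, hneg⟩ := (covers_segmentChoice_iff cp cn t).1 hcov
    refine ⟨fun v => decide (t v = .l), fun c => ?_, fun c => ?_⟩
    · obtain ⟨v, hv, htv⟩ := hpos c
      exact ⟨v, hv, by simp [htv]⟩
    · obtain ⟨v, hv, htv⟩ := hneg c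
      exact ⟨v, hv, by simp [htv]⟩

/-- Lemma 1 of the paper: a monotone 3SAT instance is satisfiable iff the
associated abstract stabbing instance has a feasible solution of size at
most `n`, the number of variables. -/
theorem stmt7 {ν P N : Type*} [Fintype ν] [Fintype P] [Fintype N]
    (cp : P → Finset ν) (cn : N → Finset ν)
    (hcp : ∀ c, (cp c).Nonempty ∧ (cp c).card ≤ 3)
    (hcn : ∀ c, (cn c).Nonempty ∧ (cn c).card ≤ 3)
    (n : ℕ) (hn : n = Fintype.card ν) :
    (∃ f : ν → Bool,
        (∀ c : P, ∃ v ∈ cp c, f v = true) ∧ (∀ c : N, ∃ v ∈ cn c, f v = false)) ↔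
      (∃ S : Finset ((VPart × ν) ⊕ P ⊕ N), S.card ≤ n ∧
        ∀ g, ∃ s ∈ S, Stabs cp cn s g) :=
  stmt7_general cp cn n hn
end

section
/- Let (X, C⁺, C⁻) be a monotone 3SAT instance with |X| = n. Consider the set of stabbers S = {l, r} × X and the set of targets D = X ⊔ C⁺ ⊔ C⁻, with the relation: (l, v) stabs target v and (r, v) stabs target v for every v ∈ X; (l, v) stabs a clause c ∈ C⁺ iff v ∈ c; (r, v) stabs a clause c ∈ C⁻ iff v ∈ c; and no other pairs are related. Then the instance has a satisfying assignment if and only if there exists S' ⊆ S with |S'| ≤ n such that every target in D is stabbed by some element of S'. -/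
/-- The two horizontal segments associated with a variable: left and right. -/
inductive LR : Type
  | l | r
  deriving DecidableEq

/-- The abstract stabbing relation of the modified reduction: stabbers are
`{l,r} × X`, targets are `X ⊔ C⁺ ⊔ C⁻`; `(l,v)` and `(r,v)` stab target `v`
(the small vertical segment `s'(v)`); `(l,v)` stabs a positive clause `c` iff
`v ∈ c`; `(r,v)` stabs a negative clause `c` iff `v ∈ c`; no other pairs. -/
def StabsT {ν P N : Type*} (cp : P → Finset ν) (cn : N → Finset ν) :
    LR × ν → ν ⊕ P ⊕ N → Prop
  | (_, v), .inl v' => v = v'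
  | (t, v), .inr (.inl c) => t = LR.l ∧ v ∈ cp c
  | (t, v), .inr (.inr c) => t = LR.r ∧ v ∈ cn c

/-! A target `v` can only be stabbed by `(l, v)` or `(r, v)`, so a stabbing set of size at most
`n` contains exactly one side of every variable, and conversely an assignment picks one side per
variable. Reading `(l, v)` as `v = true` and `(r, v)` as `v = false`, stabbing a positive
(negative) clause is then exactly satisfying it. -/

theorem Finset.injOn_snd_of_card_le_of_forall_mem {α β : Type*} [Fintype β]
    {S : Finset (α × β)} (hS : ∀ b, ∃ a, (a, b) ∈ S) (hcard : S.card ≤ Fintype.card β) :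
    Set.InjOn Prod.snd (S : Set (α × β)) := by
  classical
  have himage : S.image Prod.snd = univ :=
    eq_univ_of_forall fun b => let ⟨a, ha⟩ := hS b; mem_image_of_mem Prod.snd ha
  rw [← card_image_iff]
  exact le_antisymm card_image_le (by rwa [himage, card_univ])

section Reduction

variable {ν P N : Type*} [Fintype ν] {cp : P → Finset ν} {cn : N → Finset ν}

def stabbersOfAssignment (f : ν → Bool) : Finset (LR × ν) :=
  Finset.univ.map ⟨fun v => (bif f v then LR.l else LR.r, v), fun _ _ h => congrArg Prod.snd h⟩

theorem card_stabbersOfAssignment (f : ν → Bool) :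
    (stabbersOfAssignment f).card = Fintype.card ν :=
  Finset.card_map _

theorem exists_mem_stabbersOfAssignment_stabsT {f : ν → Bool}
    (hP : ∀ c : P, ∃ v ∈ cp c, f v = true) (hN : ∀ c : N, ∃ v ∈ cn c, f v = false) :
    ∀ d : ν ⊕ P ⊕ N, ∃ s ∈ stabbersOfAssignment f, StabsT cp cn s d := by
  have hmem (v : ν) : (bif f v then LR.l else LR.r, v) ∈ stabbersOfAssignment f :=
    Finset.mem_map_of_mem _ (Finset.mem_univ v)
  rintro (v | c | c)
  · exact ⟨_, hmem v, rfl⟩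
  · obtain ⟨v, hv, hfv⟩ := hP c
    exact ⟨_, hmem v, by rw [hfv]; exact ⟨rfl, hv⟩⟩
  · obtain ⟨v, hv, hfv⟩ := hN c
    exact ⟨_, hmem v, by rw [hfv]; exact ⟨rfl, hv⟩⟩

theorem exists_satisfying_of_stabbing {S : Finset (LR × ν)}
    (hcard : S.card ≤ Fintype.card ν) (hS : ∀ d : ν ⊕ P ⊕ N, ∃ s ∈ S, StabsT cp cn s d) :
    ∃ f : ν → Bool, (∀ c : P, ∃ v ∈ cp c, f v = true) ∧ (∀ c : N, ∃ v ∈ cn c, f v = false) := by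
  classical
  have hinj : Set.InjOn Prod.snd (S : Set (LR × ν)) := by
    refine Finset.injOn_snd_of_card_le_of_forall_mem (fun v => ?_) hcard
    obtain ⟨⟨t, w⟩, hs, rfl⟩ := hS (.inl v)
    exact ⟨t, hs⟩
  refine ⟨fun v => decide ((LR.l, v) ∈ S), fun c => ?_, fun c => ?_⟩
  · obtain ⟨⟨t, w⟩, hs, rfl, hw⟩ := hS (.inr (.inl c))
    exact ⟨w, hw, decide_eq_true hs⟩
  · obtain ⟨⟨t, w⟩, hs, rfl, hw⟩ := hS (.inr (.inr c))
    refine ⟨w, hw, decide_eq_false fun hl => ?_⟩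
    cases hinj hl hs rfl

end Reduction

theorem stmt8_general {ν P N : Type*} [Fintype ν]
    (cp : P → Finset ν) (cn : N → Finset ν)
    (n : ℕ) (hn : n = Fintype.card ν) :
    (∃ f : ν → Bool,
        (∀ c : P, ∃ v ∈ cp c, f v = true) ∧ (∀ c : N, ∃ v ∈ cn c, f v = false)) ↔
      (∃ S' : Finset (LR × ν), S'.card ≤ n ∧
        ∀ d : ν ⊕ P ⊕ N, ∃ s ∈ S', StabsT cp cn s d) := by
  subst hn
  constructor
  · rintro ⟨f, hP, hN⟩
    exact ⟨stabbersOfAssignment f, (card_stabbersOfAssignment f).le,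
      exists_mem_stabbersOfAssignment_stabsT hP hN⟩
  · rintro ⟨S', hcard, hS'⟩
    exact exists_satisfying_of_stabbing hcard hS'

/-- Correctness of the reduction for Theorem 4: a monotone 3SAT instance is
satisfiable iff the abstract `(H, V)`-stabbing instance has a feasible
solution of size at most `n`, the number of variables. -/
theorem stmt8 {ν P N : Type*} [Fintype ν] [Fintype P] [Fintype N]
    (cp : P → Finset ν) (cn : N → Finset ν)
    (hcp : ∀ c, (cp c).Nonempty ∧ (cp c).card ≤ 3)
    (hcn : ∀ c, (cn c).Nonempty ∧ (cn c).card ≤ 3)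
    (n : ℕ) (hn : n = Fintype.card ν) :
    (∃ f : ν → Bool,
        (∀ c : P, ∃ v ∈ cp c, f v = true) ∧ (∀ c : N, ∃ v ∈ cn c, f v = false)) ↔
      (∃ S' : Finset (LR × ν), S'.card ≤ n ∧
        ∀ d : ν ⊕ P ⊕ N, ∃ s ∈ S', StabsT cp cn s d) :=
  stmt8_general cp cn n hn
end

section
/- Let H be a finite nonempty set of horizontal segments each crossing the vertical line L_v: x = 0, and let V be a finite set of vertical segments. Let W be a finite set of vertical segments together with a bijection y ↦ w_y from the set of y-coordinates of segments of H to W such that for each such y, {h ∈ H : w_y ∩ h ≠ ∅} = {h ∈ H : h has y-coordinate y}. Then the minimum cardinality of a subset of H ∪ V that hits H equals the minimum cardinality of a subset of V ∪ W that hits H. -/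
/-
Stabbing a horizontal segment of `H` by a segment of `H` is the same as stabbing it by the
special vertical segment of its row: all segments of `H` cross `x = 0`, so two of them meet
exactly when they lie on the same row, and `w y` meets exactly the segments of row `y`.
Hence every member of `H ∪ V` can be traded for a member of `V ∪ W` stabbing at least as much
of `H`, and conversely, and the two optima coincide.
-/

open scoped Classical

/-- `s` is a vertical segment. -/
def IsVertical (s : Set (ℝ × ℝ)) : Prop :=
  ∃ x c d : ℝ, c ≤ d ∧ s = ({x} : Set ℝ) ×ˢ Set.Icc c d

def hittingSizes (A D : Finset (Set (ℝ × ℝ))) : Set ℕ :=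
  {k | ∃ T ⊆ A, Hits T D ∧ T.card = k}

def Dominates (B A D : Finset (Set (ℝ × ℝ))) : Prop :=
  ∀ a ∈ A, ∃ b ∈ B, ∀ d ∈ D, (a ∩ d).Nonempty → (b ∩ d).Nonempty

theorem Dominates.exists_le_mem_hittingSizes {A B D : Finset (Set (ℝ × ℝ))}
    (hBA : Dominates B A D) {k : ℕ} (hk : k ∈ hittingSizes A D) :
    ∃ k' ∈ hittingSizes B D, k' ≤ k := by
  obtain ⟨T, hTA, hTD, rfl⟩ := hk
  choose! f hfB hf using hBA
  refine ⟨(T.image f).card, ⟨T.image f, ?_, ?_, rfl⟩, Finset.card_image_le⟩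
  · intro b hb
    obtain ⟨a, haT, rfl⟩ := Finset.mem_image.mp hb
    exact hfB a (hTA haT)
  · intro d hd
    obtain ⟨a, haT, had⟩ := hTD d hd
    exact ⟨f a, Finset.mem_image_of_mem f haT, hf a (hTA haT) d hd had⟩

theorem sInf_hittingSizes_eq_of_dominates {A B D : Finset (Set (ℝ × ℝ))}
    (hBA : Dominates B A D) (hAB : Dominates A B D) :
    sInf (hittingSizes A D) = sInf (hittingSizes B D) :=
  csInf_eq_csInf_of_forall_exists_le (fun _ hk => hBA.exists_le_mem_hittingSizes hk)
    (fun _ hk => hAB.exists_le_mem_hittingSizes hk)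

theorem dominates_of_subset {A B : Finset (Set (ℝ × ℝ))} (hAB : A ⊆ B)
    (D : Finset (Set (ℝ × ℝ))) : Dominates B A D :=
  fun a ha => ⟨a, hAB ha, fun _ _ h => h⟩

theorem Dominates.mono {A B B' D : Finset (Set (ℝ × ℝ))} (hBA : Dominates B A D)
    (hBB' : B ⊆ B') : Dominates B' A D := fun a ha => by
  obtain ⟨b, hb, hab⟩ := hBA a ha
  exact ⟨b, hBB' hb, hab⟩

theorem Dominates.union {A A' B D : Finset (Set (ℝ × ℝ))} (hBA : Dominates B A D)
    (hBA' : Dominates B A' D) : Dominates B (A ∪ A') D := fun a ha =>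
  (Finset.mem_union.mp ha).elim (hBA a) (hBA' a)

theorem crossing_inter_nonempty_iff {a b a' b' y y' : ℝ} (ha : a ≤ 0) (hb : 0 ≤ b)
    (ha' : a' ≤ 0) (hb' : 0 ≤ b') :
    (Set.Icc a b ×ˢ ({y} : Set ℝ) ∩ Set.Icc a' b' ×ˢ ({y'} : Set ℝ)).Nonempty ↔ y = y' := by
  constructor
  · rintro ⟨p, ⟨_, rfl⟩, ⟨_, hp⟩⟩
    exact hp
  · rintro rfl
    exact ⟨(0, y), ⟨⟨ha, hb⟩, rfl⟩, ⟨⟨ha', hb'⟩, rfl⟩⟩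

theorem stmt11_general (H V W : Finset (Set (ℝ × ℝ)))
    (yc : Set (ℝ × ℝ) → ℝ)
    (hH : ∀ h ∈ H, ∃ a b : ℝ, a ≤ 0 ∧ 0 ≤ b ∧
      h = Set.Icc a b ×ˢ ({yc h} : Set ℝ))
    (w : ℝ → Set (ℝ × ℝ))
    (hW : W = (H.image yc).image w)
    (hwstab : ∀ y ∈ H.image yc, ∀ h ∈ H, ((w y ∩ h).Nonempty ↔ yc h = y)) :
    sInf {k | ∃ T ⊆ H ∪ V, Hits T H ∧ T.card = k} =
      sInf {k | ∃ T ⊆ V ∪ W, Hits T H ∧ T.card = k} := by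
  have hrow : ∀ h ∈ H, ∀ h' ∈ H, (h ∩ h').Nonempty ↔ yc h = yc h' := by
    intro h hh h' hh'
    obtain ⟨a, b, ha, hb, hab⟩ := hH h hh
    obtain ⟨a', b', ha', hb', hab'⟩ := hH h' hh'
    have hiff := crossing_inter_nonempty_iff (y := yc h) (y' := yc h') ha hb ha' hb'
    rwa [← hab, ← hab'] at hiff
  have hWH : Dominates W H H := fun t ht => by
    have hyt : yc t ∈ H.image yc := Finset.mem_image_of_mem yc ht
    refine ⟨w (yc t), hW ▸ Finset.mem_image_of_mem w hyt, fun h hh hth => ?_⟩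
    exact (hwstab _ hyt h hh).mpr ((hrow t ht h hh).mp hth).symm
  have hHW : Dominates H W H := fun t ht => by
    obtain ⟨y, hy, rfl⟩ := Finset.mem_image.mp (hW ▸ ht)
    obtain ⟨h₀, hh₀, rfl⟩ := Finset.mem_image.mp hy
    refine ⟨h₀, hh₀, fun h hh hth => (hrow h₀ hh₀ h hh).mpr ?_⟩
    exact ((hwstab _ hy h hh).mp hth).symm
  exact sInf_hittingSizes_eq_of_dominates
    ((hWH.mono Finset.subset_union_right).union (dominates_of_subset Finset.subset_union_left H))
    ((dominates_of_subset Finset.subset_union_right H).union (hHW.mono Finset.subset_union_left))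

/-- The remark of Section 4: `(H ⊔ V, H)`-stabbing is a special case of
`(V, H)`-stabbing. If for each `y`-coordinate `y` of `H` a vertical segment
`w y` is added whose intersections with `H` are exactly the segments of `H`
with `y`-coordinate `y` (with `y ↦ w y` injective on the `y`-coordinates and
`W` the set of these segments), then the minimum size of a subset of `H ∪ V`
hitting `H` equals the minimum size of a subset of `V ∪ W` hitting `H`. -/
theorem stmt11 (H V W : Finset (Set (ℝ × ℝ)))
    (hHne : H.Nonempty)
    (yc : Set (ℝ × ℝ) → ℝ)
    (hH : ∀ h ∈ H, ∃ a b : ℝ, a ≤ 0 ∧ 0 ≤ b ∧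
      h = Set.Icc a b ×ˢ ({yc h} : Set ℝ))
    (hV : ∀ v ∈ V, IsVertical v)
    (w : ℝ → Set (ℝ × ℝ))
    (hW : W = (H.image yc).image w)
    (hwvert : ∀ y ∈ H.image yc, IsVertical (w y))
    (hwinj : ∀ y ∈ H.image yc, ∀ y' ∈ H.image yc, w y = w y' → y = y')
    (hwstab : ∀ y ∈ H.image yc, ∀ h ∈ H, ((w y ∩ h).Nonempty ↔ yc h = y)) :
    sInf {k | ∃ T ⊆ H ∪ V, Hits T H ∧ T.card = k} =
      sInf {k | ∃ T ⊆ V ∪ W, Hits T H ∧ T.card = k} :=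
  stmt11_general H V W yc hH w hW hwstab
end
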